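/- Integration theorem: let f : ℝⁿ → ℂ be continuous, supported in the positive orthant, with |f(t)| ≤ C·exp(a·(t₁+...+tₙ)) there, and define g(t) = ∫₀^{t₁}...∫₀^{tₙ} f(x) dx. Then for p₀ > max(a,0) and the kernel K(p,t) = exp(−p₀(t₁+...+tₙ) − i(p₁t₁+...+pₙtₙ)): ∫ f(t)K(p,t) dt = (p₀+i p₁)·(p₀+i p₂)·...·(p₀+i pₙ)·∫ g(t)K(p,t) dt. -/

import Mathlib

open MeasureTheory

/-- The multiparameter Laplace kernel
`K(p,t) = exp(−p₀(t₁+...+tₙ) − i(p₁t₁+...+pₙtₙ))`. -/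
noncomputable def laplaceKernel {n : ℕ} (p₀ : ℝ) (pv : Fin n → ℝ)
    (t : Fin n → ℝ) : ℂ :=
  Complex.exp (-(((p₀ : ℂ) * ((∑ j, t j : ℝ) : ℂ))
    + Complex.I * ((∑ j, pv j * t j : ℝ) : ℂ)))

open MeasureTheory Set Filter

namespace LaplaceAux

lemma integrableOn_cexp_Ioi {z : ℂ} (hz : 0 < z.re) (x₀ : ℝ) :
    IntegrableOn (fun s : ℝ => Complex.exp (-(z * s))) (Ioi x₀) := by
  refine (exp_neg_integrableOn_Ioi x₀ hz).mono' ?_ ?_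
  · exact (Complex.continuous_exp.comp (by fun_prop)).aestronglyMeasurable
  · filter_upwards with s
    simp [Complex.norm_exp, Complex.mul_re, neg_mul]

lemma integrableOn_cexp_Ici {z : ℂ} (hz : 0 < z.re) (x₀ : ℝ) :
    IntegrableOn (fun s : ℝ => Complex.exp (-(z * s))) (Ici x₀) :=
  (integrableOn_Ici_iff_integrableOn_Ioi).2 (integrableOn_cexp_Ioi hz x₀)

lemma integral_cexp_Ioi {z : ℂ} (hz : 0 < z.re) (x₀ : ℝ) :
    ∫ s in Ioi x₀, Complex.exp (-(z * s)) = Complex.exp (-(z * x₀)) / z := by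
  have hzne : z ≠ 0 := fun h => by simp [h] at hz
  have hderiv : ∀ s ∈ Ici x₀, HasDerivAt (fun s : ℝ => -Complex.exp (-(z * s)) / z)
      (Complex.exp (-(z * s))) s := by
    intro s _
    have h1 : HasDerivAt (fun s : ℝ => -(z * s)) (-z) s := by
      have := (((hasDerivAt_id s).ofReal_comp).const_mul z).neg
      simp only [Complex.ofReal_one, mul_one] at this
      exact this
    have h2 := (h1.cexp.div_const z).neg
    have e1 : (fun s : ℝ => -Complex.exp (-(z * s)) / z) = -fun x : ℝ => Complex.exp (-(z * ↑x)) / z := by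
      funext u; simp only [Pi.neg_apply, neg_div]
    have e2 : Complex.exp (-(z * s)) = -(Complex.exp (-(z * ↑s)) * -z / z) := by
      rw [mul_neg, neg_div, neg_neg, mul_div_assoc, div_self hzne, mul_one]
    rw [e1, e2]; exact h2
  have htend : Tendsto (fun s : ℝ => -Complex.exp (-(z * s)) / z) atTop (nhds 0) := by
    rw [tendsto_zero_iff_norm_tendsto_zero]
    have heq : (fun s : ℝ => ‖-Complex.exp (-(z * s)) / z‖)
        = fun s => Real.exp (-(z.re * s)) / ‖z‖ := by
      funext s
      simp [norm_div, Complex.norm_exp, Complex.mul_re]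
    rw [heq]
    have h3 : Tendsto (fun s : ℝ => -(z.re * s)) atTop atBot := by
      apply tendsto_neg_atTop_atBot.comp
      exact Tendsto.const_mul_atTop hz tendsto_id
    simpa using (Real.tendsto_exp_atBot.comp h3).div_const ‖z‖
  have := integral_Ioi_of_hasDerivAt_of_tendsto' hderiv (integrableOn_cexp_Ioi hz x₀) htend
  rw [this]; ring

lemma integral_cexp_Ici {z : ℂ} (hz : 0 < z.re) (x₀ : ℝ) :
    ∫ s in Ici x₀, Complex.exp (-(z * s)) = Complex.exp (-(z * x₀)) / z := by
  rw [integral_Ici_eq_integral_Ioi, integral_cexp_Ioi hz]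

lemma integrableOn_rexp_Ici {b : ℝ} (hb : 0 < b) (x₀ : ℝ) :
    IntegrableOn (fun s : ℝ => Real.exp (-(b * s))) (Ici x₀) := by
  refine (integrableOn_Ici_iff_integrableOn_Ioi).2 ?_
  simpa [neg_mul] using exp_neg_integrableOn_Ioi x₀ hb

lemma integral_rexp_Ici {b : ℝ} (hb : 0 < b) (x₀ : ℝ) :
    ∫ s in Ici x₀, Real.exp (-(b * s)) = Real.exp (-(b * x₀)) / b := by
  rw [integral_Ici_eq_integral_Ioi]
  have hderiv : ∀ s ∈ Ici x₀, HasDerivAt (fun s : ℝ => -Real.exp (-(b * s)) / b)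
      (Real.exp (-(b * s))) s := by
    intro s _
    have h1 : HasDerivAt (fun s : ℝ => -(b * s)) (-b) s := by
      have := ((hasDerivAt_id s).const_mul b).neg
      simp only [mul_one] at this
      exact this
    have h2 := (h1.exp.div_const b).neg
    have e1 : (fun s : ℝ => -Real.exp (-(b * s)) / b) = -fun x : ℝ => Real.exp (-(b * x)) / b := by
      funext u; simp only [Pi.neg_apply, neg_div]
    have e2 : Real.exp (-(b * s)) = -(Real.exp (-(b * s)) * -b / b) := by
      rw [mul_neg, neg_div, neg_neg, mul_div_assoc, div_self hb.ne', mul_one]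
    rw [e1, e2]; exact h2
  have htend : Tendsto (fun s : ℝ => -Real.exp (-(b * s)) / b) atTop (nhds 0) := by
    have h3 : Tendsto (fun s : ℝ => -(b * s)) atTop atBot :=
      tendsto_neg_atTop_atBot.comp (Tendsto.const_mul_atTop hb tendsto_id)
    simpa using ((Real.tendsto_exp_atBot.comp h3).neg.div_const b)
  have := integral_Ioi_of_hasDerivAt_of_tendsto' hderiv
    ((integrableOn_rexp_Ici hb x₀).mono_set Ioi_subset_Ici_self) htend
  rw [this]; ring

lemma indicator_pi_prod {n : ℕ} {β : Type*} [CommMonoidWithZero β]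
    (S : Fin n → Set ℝ) (φ : Fin n → ℝ → β) (t : Fin n → ℝ) :
    Set.indicator (Set.pi Set.univ S) (fun t : Fin n → ℝ => ∏ j, φ j (t j)) t
      = ∏ j, Set.indicator (S j) (φ j) (t j) := by
  by_cases h : t ∈ Set.pi Set.univ S
  · rw [Set.indicator_of_mem h]
    exact Finset.prod_congr rfl fun j _ => (Set.indicator_of_mem (h j (Set.mem_univ j)) _).symm
  · rw [Set.indicator_of_notMem h]
    rw [Set.mem_univ_pi] at h
    push_neg at h
    obtain ⟨j, hj⟩ := h
    exact (Finset.prod_eq_zero (Finset.mem_univ j) (Set.indicator_of_notMem hj _)).symm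

lemma kernel_eq_prod {n : ℕ} (p₀ : ℝ) (pv : Fin n → ℝ) (t : Fin n → ℝ) :
    laplaceKernel p₀ pv t = ∏ j, Complex.exp (-(((p₀ : ℂ) + Complex.I * pv j) * t j)) := by
  rw [laplaceKernel, ← Complex.exp_sum]
  congr 1
  push_cast
  rw [Finset.mul_sum, Finset.mul_sum, ← Finset.sum_add_distrib, ← Finset.sum_neg_distrib]
  exact Finset.sum_congr rfl fun j _ => by ring

lemma prod_indicator_integral {n : ℕ} {c : Fin n → ℂ} (hc : ∀ j, 0 < (c j).re)
    (x : Fin n → ℝ) :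
    Integrable (fun t : Fin n → ℝ =>
        ∏ j, Set.indicator (Ici (x j)) (fun s => Complex.exp (-(c j * s))) (t j)) ∧
    (∫ t : Fin n → ℝ,
        ∏ j, Set.indicator (Ici (x j)) (fun s => Complex.exp (-(c j * s))) (t j))
      = ∏ j, Complex.exp (-(c j * x j)) / c j := by
  constructor
  · exact Integrable.fintype_prod fun j =>
      ((integrableOn_cexp_Ici (hc j) (x j)).integrable_indicator measurableSet_Ici)
  · rw [integral_fintype_prod_volume_eq_prod]
    refine Finset.prod_congr rfl fun j _ => ?_
    rw [integral_indicator measurableSet_Ici, integral_cexp_Ici (hc j)]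

lemma prod_indicator_integral_real {n : ℕ} {b : ℝ} (hb : 0 < b) (x : Fin n → ℝ) :
    Integrable (fun t : Fin n → ℝ =>
        ∏ j, Set.indicator (Ici (x j)) (fun s => Real.exp (-(b * s))) (t j)) ∧
    (∫ t : Fin n → ℝ,
        ∏ j, Set.indicator (Ici (x j)) (fun s => Real.exp (-(b * s))) (t j))
      = ∏ j, Real.exp (-(b * x j)) / b := by
  constructor
  · exact Integrable.fintype_prod fun j =>
      ((integrableOn_rexp_Ici hb (x j)).integrable_indicator measurableSet_Ici)
  · rw [integral_fintype_prod_volume_eq_prod]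
    refine Finset.prod_congr rfl fun j _ => ?_
    rw [integral_indicator measurableSet_Ici, integral_rexp_Ici hb]

end LaplaceAux

open LaplaceAux Set Filter

/-- Integration theorem: for a continuous `f` supported in the positive
orthant with an exponential bound there, and
`g t = ∫₀^{t₁}...∫₀^{tₙ} f x dx`, one has for `p₀ > max(a,0)`:
`∫ f·K = (p₀+i p₁)·...·(p₀+i pₙ)·∫ g·K`, both integrals over the orthant. -/
theorem laplace_integration {n : ℕ} (f : (Fin n → ℝ) → ℂ) (C a : ℝ) (hC : 0 < C)
    (hf : Continuous f)
    (hsupp : ∀ t : Fin n → ℝ, ¬ (∀ j, 0 ≤ t j) → f t = 0)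
    (hbound : ∀ t : Fin n → ℝ, (∀ j, 0 ≤ t j) →
      ‖f t‖ ≤ C * Real.exp (a * ∑ j, t j))
    (g : (Fin n → ℝ) → ℂ)
    (hg : ∀ t : Fin n → ℝ,
      g t = ∫ x in {x : Fin n → ℝ | ∀ j, 0 ≤ x j ∧ x j ≤ t j}, f x)
    (p₀ : ℝ) (pv : Fin n → ℝ) (hp : max a 0 < p₀) :
    ∫ t in {t : Fin n → ℝ | ∀ j, 0 ≤ t j}, f t * laplaceKernel p₀ pv t
      = (∏ j, ((p₀ : ℂ) + Complex.I * (pv j : ℂ))) *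
          ∫ t in {t : Fin n → ℝ | ∀ j, 0 ≤ t j}, g t * laplaceKernel p₀ pv t := by
  classical
  have hp₀ : 0 < p₀ := (le_max_right a 0).trans_lt hp
  set a' := max a 0 with ha'def
  have ha'p : a' < p₀ := hp
  have ha'0 : 0 ≤ a' := le_max_right a 0
  set c : Fin n → ℂ := fun j => (p₀ : ℂ) + Complex.I * pv j with hcdef
  have hcre : ∀ j, (c j).re = p₀ := by
    intro j; simp [hcdef, Complex.add_re, Complex.mul_re]
  have hcre' : ∀ j, 0 < (c j).re := fun j => by rw [hcre j]; exact hp₀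
  have hcne : ∀ j, c j ≠ 0 := fun j h => by
    have := hcre' j; rw [h] at this; simp at this
  set K := laplaceKernel p₀ pv with hK
  have hKprod : ∀ t, K t = ∏ j, Complex.exp (-(c j * t j)) := fun t => kernel_eq_prod p₀ pv t
  -- sets
  set Q : Set (Fin n → ℝ) := {t | ∀ j, 0 ≤ t j} with hQdef
  have hQmeas : MeasurableSet Q := by
    have : Q = Set.pi Set.univ fun _ => Ici (0 : ℝ) := by
      ext t; simp only [hQdef, Set.mem_setOf_eq, Set.mem_univ_pi, Set.mem_Ici]
    rw [this]; exact MeasurableSet.univ_pi fun _ => measurableSet_Ici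
  set D : Set ((Fin n → ℝ) × (Fin n → ℝ)) := {q | ∀ j, 0 ≤ q.1 j ∧ q.1 j ≤ q.2 j} with hDdef
  have hDmeas : MeasurableSet D := by
    have : D = ⋂ j, {q : (Fin n → ℝ) × (Fin n → ℝ) | 0 ≤ q.1 j} ∩ {q | q.1 j ≤ q.2 j} := by
      ext q; simp [hDdef, forall_and]
    rw [this]
    refine MeasurableSet.iInter fun j => MeasurableSet.inter ?_ ?_
    · exact measurableSet_le measurable_const (measurable_fst.eval)
    · exact measurableSet_le (measurable_fst.eval)
        (measurable_snd.eval)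
  -- continuity of the kernel
  have hsum1 : Continuous fun t : Fin n → ℝ => (∑ j, t j) :=
    continuous_finset_sum _ fun j _ => continuous_apply j
  have hsum2 : Continuous fun t : Fin n → ℝ => (∑ j, pv j * t j) :=
    continuous_finset_sum _ fun j _ => continuous_const.mul (continuous_apply j)
  have hKcont : Continuous K := by
    rw [hK]; unfold laplaceKernel
    exact Complex.continuous_exp.comp
      (((continuous_const.mul (Complex.continuous_ofReal.comp hsum1)).add
        (continuous_const.mul (Complex.continuous_ofReal.comp hsum2))).neg)
  set G : (Fin n → ℝ) → (Fin n → ℝ) → ℂ :=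
    fun x t => D.indicator (fun q => f q.1 * K q.2) (x, t) with hGdef
  -- pointwise descriptions of G
  have hGx : ∀ x : Fin n → ℝ, (∀ j, 0 ≤ x j) → ∀ t,
      G x t = f x * ∏ j, Set.indicator (Ici (x j))
        (fun s => Complex.exp (-(c j * s))) (t j) := by
    intro x hx t
    simp only [hGdef]
    by_cases ht : ∀ j, x j ≤ t j
    · rw [Set.indicator_of_mem (show (x, t) ∈ D from fun j => ⟨hx j, ht j⟩)]
      show f x * K t = _
      congr 1
      rw [hKprod]
      exact Finset.prod_congr rfl fun j _ =>
        (Set.indicator_of_mem (show t j ∈ Ici (x j) from ht j)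
          (fun s => Complex.exp (-(c j * s)))).symm
    · push_neg at ht
      obtain ⟨j, hj⟩ := ht
      rw [Set.indicator_of_notMem (show (x, t) ∉ D from
        fun hmem => absurd (hmem j).2 (not_le.2 hj))]
      rw [Finset.prod_eq_zero (Finset.mem_univ j)
        (Set.indicator_of_notMem (show t j ∉ Ici (x j) from not_le.2 hj) _), mul_zero]
  have hGx0 : ∀ x : Fin n → ℝ, ¬ (∀ j, 0 ≤ x j) → ∀ t, G x t = 0 := by
    intro x hx t
    simp only [hGdef]
    exact Set.indicator_of_notMem (fun hmem => hx fun j => (hmem j).1) _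
  -- integrability of each slice
  have hint_inner : ∀ x, MeasureTheory.Integrable (G x) := by
    intro x
    by_cases hx : ∀ j, 0 ≤ x j
    · have := (prod_indicator_integral hcre' x).1
      have h2 := this.const_mul (f x)
      refine h2.congr ?_
      filter_upwards with t
      exact (hGx x hx t).symm
    · refine (MeasureTheory.integrable_zero _ _ _).congr ?_
      filter_upwards with t
      exact (hGx0 x hx t).symm
  -- value of the inner integral in t
  have hval_inner : ∀ x, (∫ t, G x t)
      = Q.indicator (fun x => (∏ j, (c j)⁻¹) * (f x * K x)) x := by
    intro x
    by_cases hx : x ∈ Q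
    · rw [Set.indicator_of_mem hx]
      have : (∫ t, G x t) = f x * ∫ t : Fin n → ℝ, ∏ j, Set.indicator (Ici (x j))
          (fun s => Complex.exp (-(c j * s))) (t j) := by
        rw [← MeasureTheory.integral_const_mul]
        exact MeasureTheory.integral_congr_ae (by filter_upwards with t; exact hGx x hx t)
      rw [this, (prod_indicator_integral hcre' x).2]
      have hxprod : ∏ j, Complex.exp (-(c j * x j)) / c j
          = (∏ j, (c j)⁻¹) * K x := by
        rw [hKprod]
        rw [← Finset.prod_mul_distrib]
        exact Finset.prod_congr rfl fun j _ => by rw [div_eq_mul_inv]; ring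
      rw [hxprod]; ring
    · rw [Set.indicator_of_notMem hx]
      have : (∫ t, G x t) = ∫ t : Fin n → ℝ, (0 : ℂ) :=
        MeasureTheory.integral_congr_ae (by filter_upwards with t; exact hGx0 x hx t)
      rw [this, MeasureTheory.integral_zero]
  -- norm of G
  have hnormG : ∀ x, (∀ j, 0 ≤ x j) → ∀ t, ‖G x t‖
      = ‖f x‖ * ∏ j, Set.indicator (Ici (x j)) (fun s => Real.exp (-(p₀ * s))) (t j) := by
    intro x hx t
    rw [hGx x hx t, norm_mul, norm_prod]
    congr 1
    refine Finset.prod_congr rfl fun j _ => ?_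
    by_cases h : t j ∈ Ici (x j)
    · rw [Set.indicator_of_mem h, Set.indicator_of_mem h,
        Complex.norm_exp]
      congr 1
      simp [Complex.mul_re, hcre j]
    · rw [Set.indicator_of_notMem h, Set.indicator_of_notMem h, norm_zero]
  -- the function x ↦ ∫ t, ‖G x t‖
  have hnorm_int_eq : (fun x => ∫ t, ‖G x t‖)
      = Q.indicator (fun x => ‖f x‖ * ∏ j, Real.exp (-(p₀ * x j)) / p₀) := by
    funext x
    by_cases hx : x ∈ Q
    · rw [Set.indicator_of_mem hx]
      have : (∫ t, ‖G x t‖) = ‖f x‖ * ∫ t : Fin n → ℝ, ∏ j, Set.indicator (Ici (x j))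
          (fun s => Real.exp (-(p₀ * s))) (t j) := by
        rw [← MeasureTheory.integral_const_mul]
        exact MeasureTheory.integral_congr_ae
          (by filter_upwards with t; exact hnormG x hx t)
      rw [this, (prod_indicator_integral_real hp₀ x).2]
    · rw [Set.indicator_of_notMem hx]
      have : (∫ t, ‖G x t‖) = ∫ t : Fin n → ℝ, (0 : ℝ) := by
        refine MeasureTheory.integral_congr_ae ?_
        filter_upwards with t
        rw [hGx0 x hx t, norm_zero]
      rw [this, MeasureTheory.integral_zero]
  -- integrability of x ↦ ∫ t, ‖G x t‖
  have hnorm_int : MeasureTheory.Integrable (fun x => ∫ t, ‖G x t‖) := by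
    rw [hnorm_int_eq]
    have hBint : MeasureTheory.Integrable (fun x : Fin n → ℝ =>
        C * ∏ j, Set.indicator (Ici (0 : ℝ))
          (fun s => Real.exp (-((p₀ - a') * s)) / p₀) (x j)) := by
      refine MeasureTheory.Integrable.const_mul ?_ C
      refine MeasureTheory.Integrable.fintype_prod fun j => ?_
      refine MeasureTheory.IntegrableOn.integrable_indicator ?_ measurableSet_Ici
      exact (integrableOn_rexp_Ici (sub_pos.2 ha'p) 0).div_const p₀
    refine hBint.mono' ?_ ?_
    · refine MeasureTheory.AEStronglyMeasurable.indicator ?_ hQmeas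
      refine Continuous.aestronglyMeasurable ?_
      refine (hf.norm).mul ?_
      exact continuous_finset_prod _ fun j _ =>
        ((Real.continuous_exp.comp (continuous_const.mul (continuous_apply j)).neg).div_const p₀)
    · filter_upwards with x
      rw [Real.norm_eq_abs]
      by_cases hx : x ∈ Q
      · rw [Set.indicator_of_mem hx, abs_of_nonneg (by positivity)]
        have h1 : ‖f x‖ ≤ C * Real.exp (a' * ∑ j, x j) := by
          refine le_trans ?_ (mul_le_mul_of_nonneg_left
            (Real.exp_le_exp.2 (mul_le_mul_of_nonneg_right (le_max_left a 0)
              (Finset.sum_nonneg fun j _ => hx j))) hC.le)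
          have hb := hbound x hx
          exact hb
        have h2 : Real.exp (a' * ∑ j, x j) = ∏ j, Real.exp (a' * x j) := by
          rw [← Real.exp_sum, Finset.mul_sum]
        calc ‖f x‖ * ∏ j, Real.exp (-(p₀ * x j)) / p₀
            ≤ (C * Real.exp (a' * ∑ j, x j)) * ∏ j, Real.exp (-(p₀ * x j)) / p₀ := by
              refine mul_le_mul_of_nonneg_right h1 ?_
              exact Finset.prod_nonneg fun j _ => by positivity
          _ = C * ∏ j, Set.indicator (Ici (0 : ℝ))
              (fun s => Real.exp (-((p₀ - a') * s)) / p₀) (x j) := by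
              rw [h2, mul_assoc, ← Finset.prod_mul_distrib]
              congr 1
              refine Finset.prod_congr rfl fun j _ => ?_
              rw [Set.indicator_of_mem (show x j ∈ Ici (0:ℝ) from hx j)]
              rw [div_eq_mul_inv, div_eq_mul_inv, ← mul_assoc, ← Real.exp_add]
              congr 2
              ring
      · rw [Set.indicator_of_notMem hx, abs_zero]
        refine mul_nonneg hC.le (Finset.prod_nonneg fun j _ => ?_)
        exact Set.indicator_nonneg (fun s _ => by positivity) _
  -- integrability on the product space
  have hGprodmeas : MeasureTheory.AEStronglyMeasurable
      (fun q : (Fin n → ℝ) × (Fin n → ℝ) => G q.1 q.2) volume := by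
    have : (fun q : (Fin n → ℝ) × (Fin n → ℝ) => G q.1 q.2)
        = D.indicator (fun q => f q.1 * K q.2) := by
      funext q; simp only [hGdef]
    rw [this]
    exact (((hf.comp continuous_fst).mul
      (hKcont.comp continuous_snd)).aestronglyMeasurable).indicator hDmeas
  have hGint : MeasureTheory.Integrable
      (fun q : (Fin n → ℝ) × (Fin n → ℝ) => G q.1 q.2) volume := by
    rw [MeasureTheory.Measure.volume_eq_prod] at hGprodmeas ⊢
    rw [MeasureTheory.integrable_prod_iff hGprodmeas]
    exact ⟨Filter.Eventually.of_forall hint_inner, hnorm_int⟩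
  -- step A : the right-hand side integral
  have hBt : ∀ t : Fin n → ℝ, MeasurableSet {x : Fin n → ℝ | ∀ j, 0 ≤ x j ∧ x j ≤ t j} := by
    intro t
    have : {x : Fin n → ℝ | ∀ j, 0 ≤ x j ∧ x j ≤ t j}
        = Set.pi Set.univ fun j => Icc 0 (t j) := by
      ext x; simp only [Set.mem_setOf_eq, Set.mem_univ_pi, Set.mem_Icc]
    rw [this]; exact MeasurableSet.univ_pi fun _ => measurableSet_Icc
  have hstepA : ∫ t in Q, g t * K t = ∫ t, ∫ x, G x t := by
    have h1 : ∀ t, g t * K t = ∫ x, G x t := by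
      intro t
      rw [hg t, ← MeasureTheory.integral_mul_const,
        ← MeasureTheory.integral_indicator (hBt t)]
      refine MeasureTheory.integral_congr_ae (Filter.Eventually.of_forall fun x => ?_)
      simp only [hGdef]
      by_cases hx : x ∈ {x : Fin n → ℝ | ∀ j, 0 ≤ x j ∧ x j ≤ t j}
      · rw [Set.indicator_of_mem hx,
          Set.indicator_of_mem (show (x, t) ∈ D from fun j => hx j)]
      · rw [Set.indicator_of_notMem hx, Set.indicator_of_notMem
          (show (x, t) ∉ D from fun hmem => hx fun j => hmem j)]
    have h2 : ∫ t in Q, g t * K t = ∫ t in Q, ∫ x, G x t :=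
      MeasureTheory.setIntegral_congr_ae hQmeas
        (Filter.Eventually.of_forall fun t _ => h1 t)
    rw [h2]
    refine MeasureTheory.setIntegral_eq_integral_of_forall_compl_eq_zero fun t ht => ?_
    have : ∀ x, G x t = 0 := by
      intro x
      simp only [hGdef]
      refine Set.indicator_of_notMem (fun hmem => ht fun j => ?_) _
      exact le_trans (hmem j).1 (hmem j).2
    simp only [this, MeasureTheory.integral_zero]
  -- step B : Fubini
  have hswap : ∫ t, ∫ x, G x t = ∫ x, ∫ t, G x t := by
    have hGint' : MeasureTheory.Integrable
        (Function.uncurry fun t x : Fin n → ℝ => G x t)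
        ((volume : MeasureTheory.Measure (Fin n → ℝ)).prod volume) := by
      have h2 := hGint
      rw [MeasureTheory.Measure.volume_eq_prod] at h2
      exact h2.swap
    exact MeasureTheory.integral_integral_swap hGint'
  -- step C : compute
  have hstepC : ∫ x, ∫ t, G x t = (∏ j, (c j)⁻¹) * ∫ x in Q, f x * K x := by
    simp_rw [hval_inner]
    rw [MeasureTheory.integral_indicator hQmeas, ← MeasureTheory.integral_const_mul]
  have hfinal : ∫ t in Q, g t * K t = (∏ j, (c j)⁻¹) * ∫ x in Q, f x * K x := by
    rw [hstepA, hswap, hstepC]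
  show ∫ t in Q, f t * K t = (∏ j, c j) * ∫ t in Q, g t * K t
  rw [hfinal, ← mul_assoc, ← Finset.prod_mul_distrib]
  have : ∀ j ∈ Finset.univ, c j * (c j)⁻¹ = 1 := fun j _ => mul_inv_cancel₀ (hcne j)
  rw [Finset.prod_congr rfl this, Finset.prod_const_one, one_mul]
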